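/- For ε > 0, let β(ε) denote the unique β > e^{−1} with 1 − β − (1/(2e))·(log β)² = 1 − 3/(2e) − ε; set z(β) = e·β + log β and 𝒱(β) = β·exp(−z(β))·(exp(z(β)) − z(β) − 1). Then 𝒱(β(ε)) = 2ε + O(ε²) as ε → 0+. -/

import Mathlib

open Real Filter Set Topology Asymptotics

noncomputable def zOf (β : ℝ) : ℝ := Real.exp 1 * β + Real.log β

noncomputable def VFluid (β : ℝ) : ℝ :=
  β * Real.exp (-(zOf β)) * (Real.exp (zOf β) - zOf β - 1)

/-! Put `β = (1 + δ)/e`. Then `log β = log (1 + δ) - 1`, the equation defining `β(ε)` becomes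
`δ - log (1 + δ) + log (1 + δ)² / 2 = e ε`, and `e 𝒱(β) - 2 e ε` is an explicit combination of
`log (1 + δ)` and `exp (-δ)` whose Taylor expansion cancels up to order `δ³`. Since the left-hand
side of the equation is at least `8 δ² / 25` for small `δ`, we get `δ² = O(ε)` and hence
`𝒱(β(ε)) - 2ε = O(δ⁴) = O(ε²)`. -/

namespace KarpSipser

/-- The defining equation of `β(ε)` reads `extinctionGap δ = e ε` in the variable `δ = e β - 1`. -/
noncomputable def extinctionGap (δ : ℝ) : ℝ := δ - log (1 + δ) + log (1 + δ) ^ 2 / 2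

lemma extinction_lhs_one_add_div_exp_one {δ : ℝ} (hδ : -1 < δ) :
    1 - (1 + δ) / exp 1 - 1 / (2 * exp 1) * log ((1 + δ) / exp 1) ^ 2
      = 1 - 3 / (2 * exp 1) - extinctionGap δ / exp 1 := by
  rw [log_div (by linarith) (exp_ne_zero 1), log_exp, extinctionGap]
  field_simp
  ring

lemma zOf_one_add_div_exp_one {δ : ℝ} (hδ : -1 < δ) :
    zOf ((1 + δ) / exp 1) = δ + log (1 + δ) := by
  rw [zOf, log_div (by linarith) (exp_ne_zero 1), log_exp]
  field_simp
  ring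

lemma exp_one_mul_VFluid_one_add_div_exp_one {δ : ℝ} (hδ : -1 < δ) :
    exp 1 * VFluid ((1 + δ) / exp 1)
      = 1 + δ - (1 + δ + log (1 + δ)) * exp (-δ) := by
  have hexp : exp (-(δ + log (1 + δ))) * (1 + δ) = exp (-δ) := by
    rw [neg_add, exp_add, exp_neg (log _), exp_log (by linarith),
      inv_mul_cancel_right₀ (by linarith)]
  have hcancel : exp (-(δ + log (1 + δ))) * exp (δ + log (1 + δ)) = 1 := by
    rw [← exp_add, neg_add_cancel, exp_zero]
  rw [VFluid, zOf_one_add_div_exp_one hδ]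
  field_simp
  linear_combination (1 + δ) * hcancel - (1 + δ + log (1 + δ)) * hexp

lemma abs_log_one_add_sub_cubic_le {δ : ℝ} (h0 : 0 ≤ δ) (h1 : δ ≤ 1 / 2) :
    |log (1 + δ) - (δ - δ ^ 2 / 2 + δ ^ 3 / 3)| ≤ 2 * δ ^ 4 := by
  have h := abs_log_sub_add_sum_range_le (x := -δ) (by rw [abs_neg, abs_of_nonneg h0]; linarith) 3
  norm_num [Finset.sum_range_succ, abs_of_nonneg h0] at h
  have hrem : δ ^ 4 / (1 - δ) ≤ 2 * δ ^ 4 := by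
    rw [div_le_iff₀ (by linarith)]
    nlinarith [pow_nonneg h0 4]
  calc |log (1 + δ) - (δ - δ ^ 2 / 2 + δ ^ 3 / 3)|
      = |-δ + δ ^ 2 / 2 + (-δ) ^ 3 / 3 + log (1 + δ)| := by ring_nf
    _ ≤ 2 * δ ^ 4 := h.trans hrem

lemma abs_exp_neg_sub_cubic_le {δ : ℝ} (h0 : 0 ≤ δ) (h1 : δ ≤ 1) :
    |exp (-δ) - (1 - δ + δ ^ 2 / 2 - δ ^ 3 / 6)| ≤ δ ^ 4 := by
  have h := exp_bound (x := -δ) (by rwa [abs_neg, abs_of_nonneg h0]) (n := 4) (by norm_num)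
  norm_num [Finset.sum_range_succ, Nat.factorial, abs_of_nonneg h0] at h
  calc |exp (-δ) - (1 - δ + δ ^ 2 / 2 - δ ^ 3 / 6)|
      = |exp (-δ) - (1 + -δ + δ ^ 2 / 2 + (-δ) ^ 3 / 6)| := by ring_nf
    _ ≤ δ ^ 4 * (5 / 96) := h
    _ ≤ δ ^ 4 := by nlinarith [pow_nonneg h0 4]

lemma sq_log_one_add_le_two_mul_extinctionGap {δ : ℝ} (h0 : 0 ≤ δ) :
    log (1 + δ) ^ 2 ≤ 2 * extinctionGap δ := by
  have := log_le_sub_one_of_pos (x := 1 + δ) (by linarith)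
  rw [extinctionGap]
  linarith

lemma le_half_of_extinctionGap_lt {δ : ℝ} (h0 : 0 ≤ δ) (h : extinctionGap δ < 2 / 25) :
    δ ≤ 1 / 2 := by
  by_contra! hδ
  have hlog : 2 / 5 < log (1 + δ) :=
    lt_of_lt_of_le (by rw [lt_div_iff₀ (by linarith)]; linarith) (le_log_one_add_of_nonneg h0)
  nlinarith [sq_log_one_add_le_two_mul_extinctionGap h0]

lemma sq_le_mul_extinctionGap {δ : ℝ} (h0 : 0 ≤ δ) (h1 : δ ≤ 1 / 2) :
    δ ^ 2 ≤ 25 / 8 * extinctionGap δ := by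
  have hlog : 4 / 5 * δ ≤ log (1 + δ) :=
    le_trans (by rw [le_div_iff₀ (by linarith)]; nlinarith) (le_log_one_add_of_nonneg h0)
  nlinarith [sq_log_one_add_le_two_mul_extinctionGap h0]

lemma abs_exp_one_mul_VFluid_sub_two_mul_extinctionGap_le {δ : ℝ} (h0 : 0 ≤ δ)
    (h1 : δ ≤ 1 / 2) :
    |exp 1 * VFluid ((1 + δ) / exp 1) - 2 * extinctionGap δ| ≤ 7 * δ ^ 4 := by
  rw [exp_one_mul_VFluid_one_add_div_exp_one (by linarith), extinctionGap]
  have hp : 0 ≤ δ - δ ^ 2 / 2 + δ ^ 3 / 3 ∧ δ - δ ^ 2 / 2 + δ ^ 3 / 3 ≤ δ := by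
    constructor <;> nlinarith [pow_nonneg h0 3]
  have hq : 0 ≤ 1 - δ + δ ^ 2 / 2 - δ ^ 3 / 6 ∧ 1 - δ + δ ^ 2 / 2 - δ ^ 3 / 6 ≤ 1 := by
    constructor <;> nlinarith [pow_nonneg h0 3]
  set l := log (1 + δ)
  set p := δ - δ ^ 2 / 2 + δ ^ 3 / 3
  set q := 1 - δ + δ ^ 2 / 2 - δ ^ 3 / 6
  have hl : |l - p| ≤ 2 * δ ^ 4 := abs_log_one_add_sub_cubic_le h0 h1
  have hx : |exp (-δ) - q| ≤ δ ^ 4 := abs_exp_neg_sub_cubic_le h0 (by linarith)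
  have hl0 : 0 ≤ l := log_nonneg (by linarith)
  have hlδ : l ≤ δ := by linarith [log_le_sub_one_of_pos (x := 1 + δ) (by linarith)]
  have hδ4 : 0 ≤ δ ^ 4 := by positivity
  -- the cubic truncations `p`, `q` already cancel the expression up to `δ ^ 5 / 12 - δ ^ 6 / 18`
  have hsplit : 1 + δ - (1 + δ + l) * exp (-δ) - 2 * (δ - l + l ^ 2 / 2)
      = (δ ^ 5 / 12 - δ ^ 6 / 18) + (l - p) * (2 - l - p - q) - (1 + δ + l) * (exp (-δ) - q) := by
    ring
  have hpoly : |δ ^ 5 / 12 - δ ^ 6 / 18| ≤ δ ^ 4 := by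
    rw [abs_le]; constructor <;> nlinarith [pow_nonneg h0 5, pow_nonneg h0 6]
  have hcoef₁ : |2 - l - p - q| ≤ 2 := by
    rw [abs_le]; constructor <;> linarith
  have hcoef₂ : |1 + δ + l| ≤ 2 := by
    rw [abs_le]; constructor <;> linarith
  calc |1 + δ - (1 + δ + l) * exp (-δ) - 2 * (δ - l + l ^ 2 / 2)|
      ≤ |δ ^ 5 / 12 - δ ^ 6 / 18| + |l - p| * |2 - l - p - q| + |1 + δ + l| * |exp (-δ) - q| := by
        rw [hsplit, ← abs_mul, ← abs_mul]
        exact (abs_sub _ _).trans (by gcongr; exact abs_add_le _ _)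
    _ ≤ δ ^ 4 + 2 * δ ^ 4 * 2 + 2 * δ ^ 4 := by gcongr
    _ = 7 * δ ^ 4 := by ring

end KarpSipser

open KarpSipser in
/-- For `ε > 0` let `B ε` be the unique `β > e⁻¹` with
`1 - β - (1/(2e)) (log β)² = 1 - 3/(2e) - ε`. With `z β = e β + log β` and
`𝒱 β = β exp(-z β) (exp (z β) - z β - 1)`, one has `𝒱 (B ε) = 2 ε + O(ε²)` as `ε → 0⁺`. -/
theorem karpSipser_vertices_asymptotic_at_extinction (B : ℝ → ℝ)
    (hB : ∀ ε : ℝ, 0 < ε →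
      (Real.exp 1)⁻¹ < B ε ∧
        1 - B ε - 1 / (2 * Real.exp 1) * (Real.log (B ε)) ^ 2
          = 1 - 3 / (2 * Real.exp 1) - ε) :
    (fun ε : ℝ => VFluid (B ε) - 2 * ε) =O[𝓝[>] (0 : ℝ)] (fun ε : ℝ => ε ^ 2) := by
  refine IsBigO.of_bound (7 * (25 / 8) ^ 2 * exp 1) ?_
  filter_upwards [Ioo_mem_nhdsGT (show (0 : ℝ) < 2 / 25 / exp 1 by positivity)] with ε ⟨hε, hεu⟩
  obtain ⟨hβ, hβε⟩ := hB ε hε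
  set δ := exp 1 * B ε - 1
  have hBδ : B ε = (1 + δ) / exp 1 := by field_simp; ring
  have hδ : 0 < δ := by linarith [(inv_lt_iff_one_lt_mul₀' (exp_pos 1)).mp hβ]
  rw [hBδ, extinction_lhs_one_add_div_exp_one (by linarith)] at hβε
  have hgap : extinctionGap δ = exp 1 * ε := by
    rw [mul_comm, ← div_eq_iff (exp_ne_zero 1)]; linarith
  have hδ_half : δ ≤ 1 / 2 := le_half_of_extinctionGap_lt hδ.le
    (by rw [hgap]; exact (lt_div_iff₀' (exp_pos 1)).mp hεu)
  have hδ_sq := sq_le_mul_extinctionGap hδ.le hδ_half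
  rw [norm_pow, Real.norm_eq_abs, Real.norm_eq_abs, sq_abs, hBδ]
  calc |VFluid ((1 + δ) / exp 1) - 2 * ε|
      = |exp 1 * VFluid ((1 + δ) / exp 1) - 2 * extinctionGap δ| / exp 1 := by
        rw [hgap, mul_left_comm, ← mul_sub, abs_mul, abs_of_pos (exp_pos 1),
          mul_div_cancel_left₀ _ (exp_ne_zero 1)]
    _ ≤ 7 * (δ ^ 2) ^ 2 / exp 1 := by
        rw [← pow_mul]
        gcongr
        exact abs_exp_one_mul_VFluid_sub_two_mul_extinctionGap_le hδ.le hδ_half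
    _ ≤ 7 * (25 / 8 * extinctionGap δ) ^ 2 / exp 1 := by gcongr
    _ = 7 * (25 / 8) ^ 2 * exp 1 * ε ^ 2 := by
        rw [hgap]; field_simp
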